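/- arXiv:1801.05041 — 3 statements merged into one kernel-verified Lean document; each statement's English description precedes it below -/
import Mathlib

section
/- Knight's identity: For every τ ∈ (0,1) and all real numbers u and v, ρ_τ(u − v) − ρ_τ(u) = v·ψ_τ(u) + ∫_0^v (1{u ≤ s} − 1{u ≤ 0}) ds, where the integral is the signed (interval) integral. -/
open MeasureTheory

/-- The quantile check function `ρ_τ(u) = u (τ - 1{u ≤ 0})`. -/
noncomputable def rho (τ u : ℝ) : ℝ := u * (τ - if u ≤ 0 then 1 else 0)

/-- The quantile score function `ψ_τ(u) = 1{u ≤ 0} - τ`. -/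
noncomputable def psi (τ u : ℝ) : ℝ := (if u ≤ 0 then 1 else 0) - τ

/-! The step `s ↦ 1{u ≤ s}` is the right derivative of the ramp `s ↦ max (s - u) 0`, so its
signed integral over `[0, v]` is an increment of the ramp; and `ρ_τ x = τ x + max (-x) 0`.
Both sides of the identity are then the same combination of ramps. -/

lemma rho_eq_mul_add_max (τ x : ℝ) : rho τ x = τ * x + max (-x) 0 := by
  unfold rho
  split_ifs with hx
  · rw [max_eq_left (neg_nonneg.mpr hx)]; ring
  · rw [max_eq_right (by linarith)]; ring

lemma monotone_ite_le (u : ℝ) : Monotone fun s : ℝ => if u ≤ s then (1 : ℝ) else 0 := by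
  intro a b hab
  dsimp only
  split_ifs with ha hb <;> first | exact absurd (ha.trans hab) hb | norm_num

lemma hasDerivWithinAt_max_sub_Ioi (u x : ℝ) :
    HasDerivWithinAt (fun s : ℝ => max (s - u) 0) (if u ≤ x then 1 else 0) (Set.Ioi x) x := by
  split_ifs with hx
  · have hlin : HasDerivWithinAt (fun s : ℝ => s - u) 1 (Set.Ioi x) x :=
      ((hasDerivAt_id x).sub_const u).hasDerivWithinAt
    refine hlin.congr (fun s hs => max_eq_left ?_) (max_eq_left ?_)
    · linarith [Set.mem_Ioi.mp hs]
    · linarith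
  · have hzero : (fun s : ℝ => max (s - u) 0) =ᶠ[nhds x] fun _ => 0 := by
      filter_upwards [Iio_mem_nhds (not_le.mp hx)] with s hs
      exact max_eq_right (by linarith [Set.mem_Iio.mp hs])
    exact ((hasDerivAt_const x (0 : ℝ)).congr_of_eventuallyEq hzero).hasDerivWithinAt

lemma integral_ite_le_eq_max_sub_max (u a b : ℝ) :
    ∫ s in a..b, (if u ≤ s then (1 : ℝ) else 0) = max (b - u) 0 - max (a - u) 0 :=
  intervalIntegral.integral_eq_sub_of_hasDeriv_right
    (by fun_prop) (fun x _ => hasDerivWithinAt_max_sub_Ioi u x)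
    ((monotone_ite_le u).monotoneOn _).intervalIntegrable

theorem knight_identity_general (τ : ℝ) (u v : ℝ) :
    rho τ (u - v) - rho τ u
      = v * psi τ u
        + ∫ s in (0 : ℝ)..v,
            ((if u ≤ s then (1 : ℝ) else 0) - if u ≤ 0 then 1 else 0) := by
  rw [intervalIntegral.integral_sub ((monotone_ite_le u).monotoneOn _).intervalIntegrable
      intervalIntegrable_const, integral_ite_le_eq_max_sub_max, intervalIntegral.integral_const,
    rho_eq_mul_add_max, rho_eq_mul_add_max, psi, neg_sub, zero_sub, sub_zero, smul_eq_mul]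
  ring

/-- Knight's identity. -/
theorem knight_identity (τ : ℝ) (hτ : τ ∈ Set.Ioo (0 : ℝ) 1) (u v : ℝ) :
    rho τ (u - v) - rho τ u
      = v * psi τ u
        + ∫ s in (0 : ℝ)..v,
            ((if u ≤ s then (1 : ℝ) else 0) - if u ≤ 0 then 1 else 0) :=
  knight_identity_general τ u v
end

section
/- Pointwise bound for the empirical remainder: Let F : ℝ → ℝ be Lipschitz with constant f_max ≥ 0, and let ε, a ∈ ℝ. Then |∫_0^a (1{ε ≤ s} − 1{ε ≤ 0} − (F(s) − F(0))) ds| ≤ (f_max/2)·a² + |a|·1{|ε| ≤ |a|}. -/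
/-!
Bound the integrand pointwise on the interval between `0` and `a`: the difference of the two
indicators is at most `1` and vanishes when `|s| < |ε|` (then `ε ≤ s ↔ ε ≤ 0`), and
`|F s - F 0| ≤ f_max |s|`. Integrating `c + f_max |s|` from `0` to `a` gives `|a| c + f_max a² / 2`.
-/

open MeasureTheory

/-- The remainder term `I(a) = ∫_0^a (1{ε ≤ s} - 1{ε ≤ 0} - (F s - F 0)) ds`
from the proof of Lemma 4 of the paper. -/
noncomputable def Irem (F : ℝ → ℝ) (ε a : ℝ) : ℝ :=
  ∫ s in (0 : ℝ)..a,
    ((if ε ≤ s then (1 : ℝ) else 0) - (if ε ≤ 0 then 1 else 0) - (F s - F 0))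

theorem integral_zero_abs (a : ℝ) : ∫ s in (0 : ℝ)..a, |s| = a * |a| / 2 := by
  rcases le_total 0 a with ha | ha
  · rw [intervalIntegral.integral_congr (g := fun s => s) fun s hs => abs_of_nonneg (by
      rw [Set.uIcc_of_le ha] at hs; exact hs.1), integral_id, abs_of_nonneg ha]
    ring
  · rw [intervalIntegral.integral_congr (g := fun s => -s) fun s hs => abs_of_nonpos (by
      rw [Set.uIcc_of_ge ha] at hs; exact hs.2), intervalIntegral.integral_neg, integral_id,
      abs_of_nonpos ha]
    ring

theorem abs_integral_le_of_abs_le_add_mul_abs {f : ℝ → ℝ} {a c K : ℝ} (hc : 0 ≤ c) (hK : 0 ≤ K)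
    (hf : ∀ s ∈ Set.uIoc 0 a, |f s| ≤ c + K * |s|) :
    |∫ s in (0 : ℝ)..a, f s| ≤ |a| * (c + K * |a| / 2) := by
  have hbound : ‖∫ s in (0 : ℝ)..a, f s‖ ≤ |∫ s in (0 : ℝ)..a, (c + K * |s|)| :=
    intervalIntegral.norm_integral_le_abs_of_norm_le
      ((ae_restrict_iff' measurableSet_uIoc).mpr (.of_forall hf))
      ((by fun_prop : Continuous fun s => c + K * |s|).intervalIntegrable _ _)
  have hvalue : ∫ s in (0 : ℝ)..a, (c + K * |s|) = a * (c + K * |a| / 2) := by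
    rw [intervalIntegral.integral_add intervalIntegrable_const
      ((by fun_prop : Continuous fun s => K * |s|).intervalIntegrable _ _),
      intervalIntegral.integral_const_mul, integral_zero_abs, intervalIntegral.integral_const]
    simp only [sub_zero, smul_eq_mul]
    ring
  rwa [Real.norm_eq_abs, hvalue, abs_mul,
    abs_of_nonneg (a := c + K * |a| / 2) (by positivity)] at hbound

theorem le_iff_le_zero_of_abs_lt {ε s : ℝ} (h : |s| < |ε|) : ε ≤ s ↔ ε ≤ 0 := by
  constructor <;> intro hε
  · by_contra hpos
    rw [abs_of_pos (not_le.mp hpos)] at h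
    linarith [le_abs_self s]
  · rw [abs_of_nonpos hε] at h
    linarith [neg_abs_le s]

theorem abs_ite_le_sub_ite_le_zero_le {ε s r : ℝ} (hs : |s| ≤ r) :
    |(if ε ≤ s then (1 : ℝ) else 0) - (if ε ≤ 0 then 1 else 0)| ≤
      if |ε| ≤ r then 1 else 0 := by
  by_cases hε : |ε| ≤ r
  · rw [if_pos hε]
    split_ifs <;> norm_num
  · simp only [if_neg hε, le_iff_le_zero_of_abs_lt (hs.trans_lt (not_le.mp hε)), sub_self,
      abs_zero, le_refl]

/-- Pointwise bound for the empirical remainder: if `F` is Lipschitz with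
constant `f_max`, then `|I(a)| ≤ (f_max/2) a² + |a| 1{|ε| ≤ |a|}`. -/
theorem remainder_pointwise_bound (F : ℝ → ℝ) (fmax : ℝ) (hfmax : 0 ≤ fmax)
    (hLip : ∀ s s' : ℝ, |F s - F s'| ≤ fmax * |s - s'|) (ε a : ℝ) :
    |Irem F ε a| ≤ fmax / 2 * a ^ 2 + |a| * (if |ε| ≤ |a| then 1 else 0) := by
  have hpointwise : ∀ s ∈ Set.uIoc 0 a,
      |(if ε ≤ s then (1 : ℝ) else 0) - (if ε ≤ 0 then 1 else 0) - (F s - F 0)| ≤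
        (if |ε| ≤ |a| then 1 else 0) + fmax * |s| := by
    intro s hs
    have hsa : |s| ≤ |a| := by
      simpa using Set.abs_sub_left_of_mem_uIcc (Set.uIoc_subset_uIcc hs)
    calc _ ≤ |(if ε ≤ s then (1 : ℝ) else 0) - (if ε ≤ 0 then 1 else 0)| + |F s - F 0| :=
          abs_sub _ _
      _ ≤ _ := by
          gcongr
          · exact abs_ite_le_sub_ite_le_zero_le hsa
          · simpa using hLip s 0
  calc |Irem F ε a| ≤ |a| * ((if |ε| ≤ |a| then 1 else 0) + fmax * |a| / 2) :=
        abs_integral_le_of_abs_le_add_mul_abs (by positivity) hfmax hpointwise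
    _ = fmax / 2 * a ^ 2 + |a| * (if |ε| ≤ |a| then 1 else 0) := by
        rw [← sq_abs a]; ring
end

section
/- Second-moment bound for the empirical remainder: Let ε be a real-valued random variable whose cumulative distribution function F is Lipschitz with constant f_max ≥ 0, and let a ∈ ℝ. Define I(a) := ∫_0^a (1{ε ≤ s} − 1{ε ≤ 0} − (F(s) − F(0))) ds. Then E[I(a)²] ≤ (f_max²/2)·a⁴ + 4·f_max·|a|³. -/
/-!
Write `I(a) = A - B` with `A = ∫_0^a (1{ε ≤ s} - 1{ε ≤ 0}) ds` and `B = ∫_0^a (F s - F 0) ds`.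
The integrand of `A` is bounded by one and vanishes unless `ε` lies in the interval `Ι 0 a`
between `0` and `a`, so `A² ≤ a² 1{ε ∈ Ι 0 a}`; the Lipschitz bound `|F s - F 0| ≤ f_max |s|`
gives `|B| ≤ f_max a² / 2`. Hence `I² ≤ 2A² + 2B² ≤ 2a² 1{ε ∈ Ι 0 a} + f_max² a⁴ / 2`, and
taking expectations with `P(ε ∈ Ι 0 a) = F (max 0 a) - F (min 0 a) ≤ f_max |a|` concludes.
-/

open MeasureTheory

open Set
open scoped Interval

noncomputable def stepIncrement (e s : ℝ) : ℝ :=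
  (if e ≤ s then 1 else 0) - (if e ≤ 0 then 1 else 0)

lemma stepIncrement_monotone (e : ℝ) : Monotone (stepIncrement e) := by
  intro s t hst
  unfold stepIncrement
  split_ifs <;> linarith

lemma abs_stepIncrement_le_one (e s : ℝ) : |stepIncrement e s| ≤ 1 := by
  unfold stepIncrement
  split_ifs <;> norm_num

lemma stepIncrement_eq_zero_of_notMem_uIoc {e s : ℝ} (h : e ∉ Ι 0 s) :
    stepIncrement e s = 0 := by
  rw [mem_uIoc] at h
  have hiff : e ≤ s ↔ e ≤ 0 := by
    constructor <;> intro h₁ <;> by_contra h₂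
    exacts [h (Or.inl ⟨not_le.mp h₂, h₁⟩), h (Or.inr ⟨not_le.mp h₂, h₁⟩)]
  simp only [stepIncrement, hiff, sub_self]

lemma integral_stepIncrement_eq_zero_of_notMem_uIoc {e a : ℝ} (h : e ∉ Ι 0 a) :
    ∫ s in (0 : ℝ)..a, stepIncrement e s = 0 := by
  rw [intervalIntegral.integral_congr (g := fun _ => 0), intervalIntegral.integral_zero]
  intro s hs
  exact stepIncrement_eq_zero_of_notMem_uIoc fun he =>
    h (uIoc_subset_uIoc_of_uIcc_subset_uIcc (uIcc_subset_uIcc_left hs) he)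

lemma sq_integral_stepIncrement_le (e a : ℝ) :
    (∫ s in (0 : ℝ)..a, stepIncrement e s) ^ 2 ≤ (Ι 0 a).indicator (fun _ => a ^ 2) e := by
  by_cases he : e ∈ Ι 0 a
  · rw [indicator_of_mem he, sq_le_sq]
    simpa using intervalIntegral.norm_integral_le_of_norm_le_const (a := 0) (b := a)
      (f := stepIncrement e) fun s _ => abs_stepIncrement_le_one e s
  · simp [integral_stepIncrement_eq_zero_of_notMem_uIoc he, he]

lemma abs_integral_le_of_abs_le_mul_abs {f : ℝ → ℝ} {K : ℝ} (hf : ∀ s, |f s| ≤ K * |s|)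
    (a : ℝ) : |∫ s in (0 : ℝ)..a, f s| ≤ K * a ^ 2 / 2 := by
  wlog ha : 0 ≤ a generalizing f a
  · have := this (f := fun s => f (-s)) (fun s => by simpa using hf (-s)) (-a) (by linarith)
    rwa [intervalIntegral.integral_comp_neg, neg_neg, neg_zero, intervalIntegral.integral_symm,
      abs_neg, neg_sq] at this
  calc |∫ s in (0 : ℝ)..a, f s| ≤ ∫ s in (0 : ℝ)..a, K * s :=
        intervalIntegral.norm_integral_le_of_norm_le (f := f) (g := fun s => K * s) ha
          (ae_of_all _ fun s hs => (hf s).trans_eq (by rw [abs_of_pos hs.1]))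
          ((continuous_const_mul K).intervalIntegrable 0 a)
    _ = K * a ^ 2 / 2 := by
        rw [intervalIntegral.integral_const_mul, integral_id]
        ring

lemma Irem_eq_sub {F : ℝ → ℝ} (hF : Continuous F) (e a : ℝ) :
    Irem F e a = (∫ s in (0 : ℝ)..a, stepIncrement e s) - ∫ s in (0 : ℝ)..a, (F s - F 0) :=
  intervalIntegral.integral_sub (stepIncrement_monotone e).intervalIntegrable
    ((hF.sub continuous_const).intervalIntegrable 0 a)

lemma sq_Irem_le {F : ℝ → ℝ} {K : ℝ} (hLip : ∀ s s' : ℝ, |F s - F s'| ≤ K * |s - s'|)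
    (e a : ℝ) :
    Irem F e a ^ 2 ≤ 2 * (Ι 0 a).indicator (fun _ => a ^ 2) e + K ^ 2 / 2 * a ^ 4 := by
  have hF : Continuous F := (LipschitzWith.of_dist_le' hLip).continuous
  have hA := sq_integral_stepIncrement_le e a
  obtain ⟨hB₁, hB₂⟩ := abs_le.mp <| abs_integral_le_of_abs_le_mul_abs
    (f := fun s => F s - F 0) (fun s => by simpa using hLip s 0) a
  have hB : (∫ s in (0 : ℝ)..a, (F s - F 0)) ^ 2 ≤ (K * a ^ 2 / 2) ^ 2 := sq_le_sq' hB₁ hB₂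
  rw [Irem_eq_sub hF]
  nlinarith [sq_nonneg ((∫ s in (0 : ℝ)..a, stepIncrement e s) + ∫ s in (0 : ℝ)..a, (F s - F 0))]

lemma measureReal_preimage_uIoc_le {Ω : Type*} [MeasurableSpace Ω] {P : Measure Ω}
    [IsFiniteMeasure P] {ε : Ω → ℝ} (hε : Measurable ε) {F : ℝ → ℝ} {K : ℝ}
    (hF : ∀ s, F s = P.real {ω | ε ω ≤ s}) (hLip : ∀ s s' : ℝ, |F s - F s'| ≤ K * |s - s'|)
    (a b : ℝ) : P.real (ε ⁻¹' Ι a b) ≤ K * |b - a| := by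
  have hsub : ε ⁻¹' Iic (min a b) ⊆ ε ⁻¹' Iic (max a b) :=
    preimage_mono (Iic_subset_Iic.mpr min_le_max)
  calc P.real (ε ⁻¹' Ι a b)
      = F (max a b) - F (min a b) := by
        rw [uIoc, ← Iic_sdiff_Iic, preimage_sdiff, measureReal_sdiff hsub (hε measurableSet_Iic),
          hF, hF]
        rfl
    _ ≤ K * |max a b - min a b| := (le_abs_self _).trans (hLip _ _)
    _ = K * |b - a| := by rw [max_sub_min_eq_abs', abs_abs, abs_sub_comm]

theorem remainder_second_moment_general {Ω : Type*} [MeasurableSpace Ω]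
    (P : Measure Ω) [IsProbabilityMeasure P]
    (ε : Ω → ℝ) (hε : Measurable ε)
    (fmax : ℝ) (F : ℝ → ℝ)
    (hFdef : ∀ s : ℝ, F s = (P {ω | ε ω ≤ s}).toReal)
    (hLip : ∀ s s' : ℝ, |F s - F s'| ≤ fmax * |s - s'|) (a : ℝ) :
    ∫ ω, (Irem F (ε ω) a) ^ 2 ∂P ≤ fmax ^ 2 / 2 * a ^ 4 + 4 * fmax * |a| ^ 3 := by
  set p := P.real (ε ⁻¹' Ι 0 a)
  have hS : MeasurableSet (ε ⁻¹' Ι 0 a) := hε measurableSet_Ioc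
  have hp : p ≤ fmax * |a| := by
    simpa using measureReal_preimage_uIoc_le hε hFdef hLip 0 a
  have hind : Integrable (fun ω => 2 * (ε ⁻¹' Ι 0 a).indicator (fun _ => a ^ 2) ω) P :=
    ((integrable_const _).indicator hS).const_mul 2
  calc ∫ ω, (Irem F (ε ω) a) ^ 2 ∂P
      ≤ ∫ ω, (2 * (ε ⁻¹' Ι 0 a).indicator (fun _ => a ^ 2) ω + fmax ^ 2 / 2 * a ^ 4) ∂P :=
        integral_mono_of_nonneg (ae_of_all _ fun _ => sq_nonneg _)
          (hind.add (integrable_const _)) (ae_of_all _ fun ω => sq_Irem_le hLip (ε ω) a)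
    _ = 2 * a ^ 2 * p + fmax ^ 2 / 2 * a ^ 4 := by
        rw [integral_add hind (integrable_const _), integral_const_mul,
          integral_indicator_const _ hS]
        simp only [smul_eq_mul, integral_const, probReal_univ, one_mul, p]
        ring
    _ ≤ fmax ^ 2 / 2 * a ^ 4 + 4 * fmax * |a| ^ 3 := by
        have hp0 : 0 ≤ p := measureReal_nonneg
        have hcube : |a| ^ 3 = a ^ 2 * |a| := by rw [pow_succ, sq_abs]
        rw [hcube]
        nlinarith [mul_le_mul_of_nonneg_left hp (sq_nonneg a), mul_nonneg (sq_nonneg a) hp0]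

/-- Second-moment bound for the empirical remainder: if the cdf `F` of `ε` is
Lipschitz with constant `f_max`, then `E[I(a)²] ≤ (f_max²/2) a⁴ + 4 f_max |a|³`. -/
theorem remainder_second_moment {Ω : Type*} [MeasurableSpace Ω]
    (P : Measure Ω) [IsProbabilityMeasure P]
    (ε : Ω → ℝ) (hε : Measurable ε)
    (fmax : ℝ) (hfmax : 0 ≤ fmax) (F : ℝ → ℝ)
    (hFdef : ∀ s : ℝ, F s = (P {ω | ε ω ≤ s}).toReal)
    (hLip : ∀ s s' : ℝ, |F s - F s'| ≤ fmax * |s - s'|) (a : ℝ) :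
    ∫ ω, (Irem F (ε ω) a) ^ 2 ∂P ≤ fmax ^ 2 / 2 * a ^ 4 + 4 * fmax * |a| ^ 3 :=
  remainder_second_moment_general P ε hε fmax F hFdef hLip a
end
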